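/- Let p ≥ 0. Suppose G_0,…,G_{p-1} are nowhere zero, G_p is identically zero, and τ ∈ 𝔉 satisfies D(τ) + b·τ = 0. Define A_{-1} = id, A_k = (T − a_k·)∘A_{k-1} for 0 ≤ k ≤ p, and Ā_0 = id, Ā_k = (T − a_k·)∘Ā_{k-1} for 1 ≤ k ≤ p. Then D∘(T^p(τ)·)∘A_p = (T^p(τ)·)∘Ā_p∘L on 𝔉. In particular, the operator 𝓘 = T^p(τ)·A_p maps every symmetry (element of ker L) into ker D; i.e. 𝓘 is a formal i-integral. -/

import Mathlib

/-!
Semi-discrete setting: the space `𝔉` is modelled by `SDF = ℤ → ℝ → ℝ`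
(functions `φ(i,x)`, smooth in `x` for each `i`), with the shift `T`,
the inverse shift `Tinv`, the `k`-fold shift `Tz k`, and the derivative `D`.
For `g : SDF`, pointwise multiplication `g * φ` models the operator `g·`.
-/

/-- The underlying function space of `𝔉`. -/
abbrev SDF : Type := ℤ → ℝ → ℝ

namespace SDF

noncomputable section

/-- The shift operator `T(φ)(i,x) = φ(i+1,x)`. -/
def T (φ : SDF) : SDF := fun i x => φ (i + 1) x

/-- The inverse shift operator `T⁻¹(φ)(i,x) = φ(i-1,x)`. -/
def Tinv (φ : SDF) : SDF := fun i x => φ (i - 1) x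

/-- The `k`-fold shift. -/
def Tz (k : ℤ) (φ : SDF) : SDF := fun i x => φ (i + k) x

/-- The total derivative `D(φ)(i,x) = ∂φ/∂x (i,x)`. -/
def D (φ : SDF) : SDF := fun i x => deriv (φ i) x

/-- Membership in `𝔉`: infinitely differentiable in `x` for every `i`. -/
def Smooth (φ : SDF) : Prop := ∀ i : ℤ, ContDiff ℝ (⊤ : ℕ∞) (φ i)

/-- A function that is nowhere zero. -/
def NowhereZero (φ : SDF) : Prop := ∀ i x, φ i x ≠ 0

/-- The linearization operator `L = T∘D − a·D − b·T − c·`. -/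
def L (a b c : SDF) (φ : SDF) : SDF := T (D φ) - a * D φ - b * T φ - c * φ

/-- The pair `(a_k, G_k)` of the Laplace i-transformations:
`a_0 = a`, `G_0 = c + a·b − D(a)`,
`a_k = a_{k-1}·T(G_{k-1})/G_{k-1}`,
`G_k = T(G_{k-1}) − D(a_k) + a_k·(T^k(b) − T^{k-1}(b))`. -/
def aG (a b c : SDF) : ℕ → SDF × SDF
  | 0 => (a, c + a * b - D a)
  | k + 1 =>
      let ak := (aG a b c k).1 * T (aG a b c k).2 / (aG a b c k).2
      (ak, T (aG a b c k).2 - D ak + ak * (Tz ((k : ℤ) + 1) b - Tz (k : ℤ) b))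

/-- The function `a_k`. -/
def ai (a b c : SDF) (k : ℕ) : SDF := (aG a b c k).1

/-- The Laplace i-invariant `G_k`. -/
def Gi (a b c : SDF) (k : ℕ) : SDF := (aG a b c k).2

/-- The pair `(b_k, H_k)` of the Laplace x-transformations:
`b_0 = b`, `H_0 = c + a·T⁻¹(b)`,
`b_k = T⁻¹(b_{k-1}) + D(H_{k-1})/H_{k-1}`,
`H_k = H_{k-1} + a·(T⁻¹(b_k) − b_k) + D(a)`. -/
def bH (a b c : SDF) : ℕ → SDF × SDF
  | 0 => (b, c + a * Tinv b)
  | k + 1 =>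
      let bk := Tinv (bH a b c k).1 + D (bH a b c k).2 / (bH a b c k).2
      (bk, (bH a b c k).2 + a * (Tinv bk - bk) + D a)

/-- The function `b_k`. -/
def bx (a b c : SDF) (k : ℕ) : SDF := (bH a b c k).1

/-- The Laplace x-invariant `H_k`. -/
def Hx (a b c : SDF) (k : ℕ) : SDF := (bH a b c k).2

/-- The operator `L_{-k}`: `L_0 = L` and
`L_{-k} = (D − T^k(b)·)∘(T − a_k·) − G_k·` for `k ≥ 1`. -/
def Lneg (a b c : SDF) : ℕ → SDF → SDF
  | 0, φ => L a b c φ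
  | k + 1, φ =>
      D (T φ - ai a b c (k + 1) * φ)
        - Tz ((k : ℤ) + 1) b * (T φ - ai a b c (k + 1) * φ)
        - Gi a b c (k + 1) * φ

/-- The operator `L_k`, `k ≥ 1`: `L_0 = L` and
`L_k = (T − a·)∘(D − T⁻¹(b_k)·) − H_k·` for `k ≥ 1`. -/
def Lpos (a b c : SDF) : ℕ → SDF → SDF
  | 0, φ => L a b c φ
  | k + 1, φ =>
      T (D φ - Tinv (bx a b c (k + 1)) * φ)
        - a * (D φ - Tinv (bx a b c (k + 1)) * φ)
        - Hx a b c (k + 1) * φ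

/-- `Cc (k+1)` is the operator `C_k = (D − T⁻¹(b_k)·)∘C_{k-1}`; `Cc 0 = id` is `C_{-1}`. -/
def Cc (a b c : SDF) : ℕ → SDF → SDF
  | 0, φ => φ
  | k + 1, φ => D (Cc a b c k φ) - Tinv (bx a b c k) * Cc a b c k φ

/-- `Cbar k` is the operator `C̄_k`: `C̄_0 = id`, `C̄_k = (D − b_k·)∘C̄_{k-1}`. -/
def Cbar (a b c : SDF) : ℕ → SDF → SDF
  | 0, φ => φ
  | k + 1, φ => D (Cbar a b c k φ) - bx a b c (k + 1) * Cbar a b c k φ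

/-- `Aa (k+1)` is the operator `A_k = (T − a_k·)∘A_{k-1}`; `Aa 0 = id` is `A_{-1}`. -/
def Aa (a b c : SDF) : ℕ → SDF → SDF
  | 0, φ => φ
  | k + 1, φ => T (Aa a b c k φ) - ai a b c k * Aa a b c k φ

/-- `Abar k` is the operator `Ā_k`: `Ā_0 = id`, `Ā_k = (T − a_k·)∘Ā_{k-1}`. -/
def Abar (a b c : SDF) : ℕ → SDF → SDF
  | 0, φ => φ
  | k + 1, φ => T (Abar a b c k φ) - ai a b c (k + 1) * Abar a b c k φ

end

section AuxProofs

variable {a b c : SDF}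

lemma smooth_sub {f g : SDF} (hf : Smooth f) (hg : Smooth g) : Smooth (f - g) :=
  fun i => (hf i).sub (hg i)

lemma smooth_add {f g : SDF} (hf : Smooth f) (hg : Smooth g) : Smooth (f + g) :=
  fun i => (hf i).add (hg i)

lemma smooth_mul {f g : SDF} (hf : Smooth f) (hg : Smooth g) : Smooth (f * g) :=
  fun i => (hf i).mul (hg i)

lemma smooth_div {f g : SDF} (hf : Smooth f) (hg : Smooth g) (h : NowhereZero g) :
    Smooth (f / g) :=
  fun i => (hf i).div (hg i) (fun x => h i x)

lemma smooth_T {f : SDF} (hf : Smooth f) : Smooth (T f) := fun i => hf (i + 1)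

lemma smooth_Tz {f : SDF} (hf : Smooth f) (k : ℤ) : Smooth (Tz k f) := fun i => hf (i + k)

lemma smooth_D {f : SDF} (hf : Smooth f) : Smooth (D f) :=
  fun i => (contDiff_infty_iff_deriv.mp (hf i)).2

lemma diffAt {f : SDF} (hf : Smooth f) (i : ℤ) (x : ℝ) : DifferentiableAt ℝ (f i) x :=
  ((hf i).differentiable (by simp)).differentiableAt

lemma D_sub_mul {f g h : SDF} (hf : Smooth f) (hg : Smooth g) (hh : Smooth h) :
    D (f - g * h) = D f - D g * h - g * D h := by
  funext i x
  show deriv (fun y => f i y - g i y * h i y) x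
      = deriv (f i) x - deriv (g i) x * h i x - g i x * deriv (h i) x
  rw [deriv_fun_sub (g := fun y => g i y * h i y) (diffAt hf i x) ((diffAt hg i x).mul (diffAt hh i x)),
    deriv_fun_mul (diffAt hg i x) (diffAt hh i x)]
  ring

lemma D_mul {f g : SDF} (hf : Smooth f) (hg : Smooth g) :
    D (f * g) = D f * g + f * D g := by
  funext i x
  show deriv (fun y => f i y * g i y) x = deriv (f i) x * g i x + f i x * deriv (g i) x
  rw [deriv_fun_mul (diffAt hf i x) (diffAt hg i x)]

lemma D_T (f : SDF) : D (T f) = T (D f) := rfl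

lemma T_Tz (k : ℤ) (f : SDF) : T (Tz k f) = Tz (k + 1) f := by
  funext i x
  show f (i + 1 + k) x = f (i + (k + 1)) x
  congr 1
  ring

lemma Tz_zero (f : SDF) : Tz 0 f = f := by
  funext i x
  show f (i + 0) x = f i x
  rw [add_zero]

lemma ai_succ (k : ℕ) : ai a b c (k + 1) = ai a b c k * T (Gi a b c k) / Gi a b c k := rfl

lemma Gi_succ (k : ℕ) :
    Gi a b c (k + 1)
      = T (Gi a b c k) - D (ai a b c (k + 1))
        + ai a b c (k + 1) * (Tz ((k : ℤ) + 1) b - Tz (k : ℤ) b) := rfl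

lemma ai_mul_Gi {k : ℕ} (h : NowhereZero (Gi a b c k)) :
    ai a b c (k + 1) * Gi a b c k = ai a b c k * T (Gi a b c k) := by
  funext i x
  show ai a b c k i x * T (Gi a b c k) i x / Gi a b c k i x * Gi a b c k i x
      = ai a b c k i x * T (Gi a b c k) i x
  rw [div_mul_cancel₀ _ (h i x)]

lemma smooth_aiGi (ha : Smooth a) (hb : Smooth b) (hc : Smooth c) :
    ∀ k : ℕ, (∀ m, m < k → NowhereZero (Gi a b c m)) →
      Smooth (ai a b c k) ∧ Smooth (Gi a b c k)
  | 0, _ => ⟨ha, smooth_sub (smooth_add hc (smooth_mul ha hb)) (smooth_D ha)⟩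
  | k + 1, h => by
    obtain ⟨h1, h2⟩ := smooth_aiGi ha hb hc k (fun m hm => h m (Nat.lt_succ_of_lt hm))
    have hnz : NowhereZero (Gi a b c k) := h k k.lt_succ_self
    have ha' : Smooth (ai a b c (k + 1)) := by
      rw [ai_succ]
      exact smooth_div (smooth_mul h1 (smooth_T h2)) h2 hnz
    refine ⟨ha', ?_⟩
    rw [Gi_succ]
    exact smooth_add (smooth_sub (smooth_T h2) (smooth_D ha'))
      (smooth_mul ha' (smooth_sub (smooth_Tz hb _) (smooth_Tz hb _)))

lemma smooth_Aa (ha : Smooth a) (hb : Smooth b) (hc : Smooth c) {φ : SDF} (hφ : Smooth φ) :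
    ∀ k : ℕ, (∀ m, m + 1 < k → NowhereZero (Gi a b c m)) → Smooth (Aa a b c k φ)
  | 0, _ => hφ
  | k + 1, h => by
    have ih := smooth_Aa ha hb hc hφ k (fun m hm => h m (by omega))
    have hai := (smooth_aiGi ha hb hc k (fun m hm => h m (by omega))).1
    show Smooth (T (Aa a b c k φ) - ai a b c k * Aa a b c k φ)
    exact smooth_sub (smooth_T ih) (smooth_mul hai ih)

lemma Abar_zero : ∀ k : ℕ, Abar a b c k (0 : SDF) = 0
  | 0 => rfl
  | k + 1 => by
    show T (Abar a b c k 0) - ai a b c (k + 1) * Abar a b c k 0 = 0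
    rw [Abar_zero k, mul_zero, sub_zero]
    rfl

lemma claim (ha : Smooth a) (hb : Smooth b) (hc : Smooth c) {φ : SDF} (hφ : Smooth φ) :
    ∀ k : ℕ, (∀ m, m < k → NowhereZero (Gi a b c m)) →
      Abar a b c k (L a b c φ)
        = D (Aa a b c (k + 1) φ) - Tz (k : ℤ) b * Aa a b c (k + 1) φ
          - Gi a b c k * Aa a b c k φ
  | 0, _ => by
    show L a b c φ
        = D (T (Aa a b c 0 φ) - ai a b c 0 * Aa a b c 0 φ)
          - Tz ((0 : ℕ) : ℤ) b * (T (Aa a b c 0 φ) - ai a b c 0 * Aa a b c 0 φ)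
          - Gi a b c 0 * Aa a b c 0 φ
    show L a b c φ
        = D (T φ - a * φ) - Tz ((0 : ℕ) : ℤ) b * (T φ - a * φ)
          - (c + a * b - D a) * φ
    rw [D_sub_mul (smooth_T hφ) ha hφ, D_T,
      show ((0 : ℕ) : ℤ) = 0 from rfl, Tz_zero]
    show T (D φ) - a * D φ - b * T φ - c * φ = _
    ring
  | k + 1, h => by
    have hk : ∀ m, m < k → NowhereZero (Gi a b c m) := fun m hm => h m (Nat.lt_succ_of_lt hm)
    have ih := claim ha hb hc hφ k hk
    have hnz : NowhereZero (Gi a b c k) := h k k.lt_succ_self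
    have hsai' : Smooth (ai a b c (k + 1)) := (smooth_aiGi ha hb hc (k + 1) h).1
    have hψ : Smooth (Aa a b c (k + 1) φ) := smooth_Aa ha hb hc hφ (k + 1) (fun m hm => h m (by omega))
    have hψχ : Aa a b c (k + 1) φ = T (Aa a b c k φ) - ai a b c k * Aa a b c k φ := rfl
    have hrel := ai_mul_Gi (a := a) (b := b) (c := c) hnz
    have hcast : (((k + 1 : ℕ)) : ℤ) = (k : ℤ) + 1 := by push_cast; ring
    show T (Abar a b c k (L a b c φ)) - ai a b c (k + 1) * Abar a b c k (L a b c φ)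
        = D (T (Aa a b c (k + 1) φ) - ai a b c (k + 1) * Aa a b c (k + 1) φ)
          - Tz (((k + 1 : ℕ)) : ℤ) b
              * (T (Aa a b c (k + 1) φ) - ai a b c (k + 1) * Aa a b c (k + 1) φ)
          - Gi a b c (k + 1) * Aa a b c (k + 1) φ
    rw [ih, D_sub_mul (smooth_T hψ) hsai' hψ, D_T, Gi_succ, hcast]
    have hT : T (D (Aa a b c (k + 1) φ) - Tz (k : ℤ) b * Aa a b c (k + 1) φ
          - Gi a b c k * Aa a b c k φ)
        = T (D (Aa a b c (k + 1) φ)) - Tz ((k : ℤ) + 1) b * T (Aa a b c (k + 1) φ)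
          - T (Gi a b c k) * T (Aa a b c k φ) := by
      rw [← T_Tz]
      rfl
    rw [hT]
    linear_combination (T (Gi a b c k)) * hψχ + (Aa a b c k φ) * hrel

end AuxProofs

/-- Let `p ≥ 0`.  If `G_0, …, G_{p-1}` are nowhere zero, `G_p ≡ 0`,
and `D(τ) + b·τ = 0`, then `D∘(T^p(τ)·)∘A_p = (T^p(τ)·)∘Ā_p∘L` on `𝔉`;
in particular `𝓘 = T^p(τ)·A_p` maps `ker L` into `ker D`, i.e. `𝓘` is a formal
i-integral. (Here `A_p = Aa (p+1)` and `Ā_p = Abar p`.) -/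
theorem statement4 (a b c τ : SDF) (ha : Smooth a) (hb : Smooth b) (hc : Smooth c)
    (hτs : Smooth τ) (p : ℕ) (hG : ∀ m, m < p → NowhereZero (Gi a b c m))
    (hGp : Gi a b c p = 0) (hτ : D τ + b * τ = 0) :
    (∀ φ : SDF, Smooth φ →
        D (Tz (p : ℤ) τ * Aa a b c (p + 1) φ)
          = Tz (p : ℤ) τ * Abar a b c p (L a b c φ)) ∧
    (∀ φ : SDF, Smooth φ → L a b c φ = 0 →
        D (Tz (p : ℤ) τ * Aa a b c (p + 1) φ) = 0) := by
  have main : ∀ φ : SDF, Smooth φ →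
      D (Tz (p : ℤ) τ * Aa a b c (p + 1) φ)
        = Tz (p : ℤ) τ * Abar a b c p (L a b c φ) := by
    intro φ hφ
    have h1 := claim ha hb hc hφ p hG
    rw [hGp] at h1
    have hψA : Smooth (Aa a b c (p + 1) φ) :=
      smooth_Aa ha hb hc hφ (p + 1) (fun m hm => hG m (by omega))
    have hDτ : D (Tz (p : ℤ) τ) = -(Tz (p : ℤ) b * Tz (p : ℤ) τ) := by
      have hd : D τ = -(b * τ) := by
        funext i x
        have h0 : D τ i x + b i x * τ i x = 0 := congrFun (congrFun hτ i) x
        show D τ i x = -(b i x * τ i x)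
        linarith
      calc D (Tz (p : ℤ) τ) = Tz (p : ℤ) (D τ) := rfl
        _ = Tz (p : ℤ) (-(b * τ)) := by rw [hd]
        _ = -(Tz (p : ℤ) b * Tz (p : ℤ) τ) := rfl
    rw [D_mul (smooth_Tz hτs (p : ℤ)) hψA, h1, hDτ]
    ring
  refine ⟨main, fun φ hφ hL => ?_⟩
  rw [main φ hφ, hL, Abar_zero, mul_zero]

end SDF
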